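/- Let R be a ring, n ≥ 1 an integer, and 𝒳 a class of left R-modules. Every special 𝒳-pure submodule of an n-𝒳-injective left R-module is n-𝒳-injective. In particular, every special 𝒳-pure submodule of an injective left R-module is n-𝒳-injective. -/

import Mathlib

/- Common framework: `n`-presented modules, syzygies, special 𝒳-presented modules,
   Ext/Tor vanishing (Tor via a hand-rolled tensor product over a possibly
   noncommutative ring, since Mathlib's tensor product requires commutativity),
   `n`-𝒳-injective / `n`-𝒳-flat modules, and the Gorenstein versions. -/

universe u
open CategoryTheory LinearMap DirectSum

section Basic

variable (R : Type u) [Ring R]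

/-- `U` is an `n`-presented left `R`-module: there is an exact sequence
`F_n → ⋯ → F_0 → U → 0` with each `F_i` finitely generated free. -/
def IsNPresented : ℕ → ModuleCat.{u} R → Prop
  | 0, U => Module.Finite R U
  | n + 1, U => ∃ (F : ModuleCat.{u} R) (f : F →ₗ[R] U),
      Module.Free R F ∧ Module.Finite R F ∧ Function.Surjective f ∧
      IsNPresented n (ModuleCat.of R (LinearMap.ker f))

/-- `K` is a `j`-th syzygy of `U` computed from finitely generated free modules:
`IsSyzygy 0 U K` iff `K ≅ U`, and a `(j+1)`-st syzygy of `U` is a `j`-th syzygy of the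
kernel of a surjection from a finitely generated free module onto `U`. -/
def IsSyzygy : ℕ → ModuleCat.{u} R → ModuleCat.{u} R → Prop
  | 0, U, K => Nonempty (K ≃ₗ[R] U)
  | j + 1, U, K => ∃ (F : ModuleCat.{u} R) (f : F →ₗ[R] U),
      Module.Free R F ∧ Module.Finite R F ∧ Function.Surjective f ∧
      IsSyzygy j (ModuleCat.of R (LinearMap.ker f)) K

/-- `Ext_R^k(U, M) = 0`. -/
noncomputable def ExtVanishes (k : ℕ) (U M : ModuleCat.{u} R) : Prop :=
  Subsingleton (((Ext ℤ (ModuleCat.{u} R) k).obj (Opposite.op U)).obj M)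

variable (𝒳 : Set (ModuleCat.{u} R)) (n : ℕ)

/-- `K` is a special 𝒳-presented module: `K` is the image `K_{n-1} = Im(F_{n-1} → F_{n-2})`
arising from an `n`-presentation of some `U ∈ 𝒳` (with the convention `K = U` when `n = 1`),
i.e. `K` is an `(n-1)`-st syzygy of some `n`-presented `U ∈ 𝒳`. -/
def IsSpecialPresented (K : ModuleCat.{u} R) : Prop :=
  ∃ U ∈ 𝒳, IsNPresented R n U ∧ IsSyzygy R (n - 1) U K

/-- `M` is an `n`-𝒳-injective left `R`-module: `Ext_R^n(U, M) = 0` for every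
`n`-presented `U ∈ 𝒳`. -/
noncomputable def IsNXInjective (M : ModuleCat.{u} R) : Prop :=
  ∀ U ∈ 𝒳, IsNPresented R n U → ExtVanishes R n U M

/-- Projective dimension at most `m`. -/
def ProjDimLE : ℕ → ModuleCat.{u} R → Prop
  | 0, K => Module.Projective R K
  | m + 1, K => ∃ (P : ModuleCat.{u} R) (f : P →ₗ[R] K),
      Module.Projective R P ∧ Function.Surjective f ∧
      ProjDimLE m (ModuleCat.of R (LinearMap.ker f))

/-- Finite projective dimension. -/
def HasFiniteProjDim (K : ModuleCat.{u} R) : Prop := ∃ m, ProjDimLE R m K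

/-- `R` is left `n`-𝒳-coherent: every `n`-presented module in `𝒳` is `(n+1)`-presented. -/
def IsNXCoherent : Prop := ∀ U ∈ 𝒳, IsNPresented R n U → IsNPresented R (n + 1) U

/-- `M` has `n`-𝒳-injective dimension at most `m`:
`Ext_R^{n+i}(U, M) = 0` for all `i ≥ m + 1` and all `n`-presented `U ∈ 𝒳`. -/
noncomputable def NXInjDimLE (m : ℕ) (M : ModuleCat.{u} R) : Prop :=
  ∀ U ∈ 𝒳, IsNPresented R n U → ∀ i : ℕ, m + 1 ≤ i → ExtVanishes R (n + i) U M

/-- `M` has finite `n`-𝒳-injective dimension. -/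
noncomputable def HasFiniteNXInjDim (M : ModuleCat.{u} R) : Prop := ∃ m, NXInjDimLE R 𝒳 n m M

end Basic

section Tensor

variable (R : Type u) [Ring R]

/-- The defining relations of the tensor product `N ⊗_R U` of a right `R`-module `N`
with a left `R`-module `U`, inside `N ⊗_ℤ U`. -/
def tensorRel (N : Type u) [AddCommGroup N] [Module Rᵐᵒᵖ N]
    (U : Type u) [AddCommGroup U] [Module R U] : Submodule ℤ (TensorProduct ℤ N U) :=
  Submodule.span ℤ {x | ∃ (r : R) (a : N) (v : U),
    x = (MulOpposite.op r • a) ⊗ₜ[ℤ] v - a ⊗ₜ[ℤ] (r • v)}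

/-- The tensor product `N ⊗_R U` of a right `R`-module `N` with a left `R`-module `U`
over a (possibly noncommutative) ring `R`, as an abelian group. -/
abbrev RTensor (N : Type u) [AddCommGroup N] [Module Rᵐᵒᵖ N]
    (U : Type u) [AddCommGroup U] [Module R U] : Type u :=
  TensorProduct ℤ N U ⧸ tensorRel R N U

/-- Functoriality of `RTensor` in both variables. -/
noncomputable def rtmap {N N' : Type u} [AddCommGroup N] [Module Rᵐᵒᵖ N]
    [AddCommGroup N'] [Module Rᵐᵒᵖ N']
    {U U' : Type u} [AddCommGroup U] [Module R U] [AddCommGroup U'] [Module R U']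
    (g : N →ₗ[Rᵐᵒᵖ] N') (f : U →ₗ[R] U') :
    RTensor R N U →ₗ[ℤ] RTensor R N' U' :=
  Submodule.mapQ (tensorRel R N U) (tensorRel R N' U')
    (TensorProduct.map g.toAddMonoidHom.toIntLinearMap f.toAddMonoidHom.toIntLinearMap)
    (by
      rw [tensorRel, Submodule.span_le]
      rintro x ⟨r, a, v, rfl⟩
      simp only [SetLike.mem_coe, Submodule.mem_comap, map_sub, TensorProduct.map_tmul,
        AddMonoidHom.coe_toIntLinearMap, LinearMap.toAddMonoidHom_coe]
      apply Submodule.subset_span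
      exact ⟨r, g a, f v, by
        erw [map_sub, TensorProduct.map_tmul, TensorProduct.map_tmul]
        simp [map_smul]⟩)

/-- A left `R`-module `M` is flat if `- ⊗_R M` preserves injections of right `R`-modules. -/
noncomputable def IsFlatModule (M : ModuleCat.{u} R) : Prop :=
  ∀ (A B : ModuleCat.{u} Rᵐᵒᵖ) (i : A →ₗ[Rᵐᵒᵖ] B), Function.Injective i →
    Function.Injective (rtmap R i (LinearMap.id (M := M)))

/-- A right `R`-module `N` is flat if `N ⊗_R -` preserves injections of left `R`-modules. -/
noncomputable def IsFlatRight (N : ModuleCat.{u} Rᵐᵒᵖ) : Prop :=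
  ∀ (A B : ModuleCat.{u} R) (i : A →ₗ[R] B), Function.Injective i →
    Function.Injective (rtmap R (LinearMap.id (M := N)) i)

/-- Flat dimension of a left `R`-module at most `m`. -/
noncomputable def FlatDimLE : ℕ → ModuleCat.{u} R → Prop
  | 0, K => IsFlatModule R K
  | m + 1, K => ∃ (P : ModuleCat.{u} R) (f : P →ₗ[R] K),
      IsFlatModule R P ∧ Function.Surjective f ∧
      FlatDimLE m (ModuleCat.of R (LinearMap.ker f))

/-- Finite flat dimension. -/
noncomputable def HasFiniteFlatDim (K : ModuleCat.{u} R) : Prop := ∃ m, FlatDimLE R m K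

variable (𝒳 : Set (ModuleCat.{u} R)) (n : ℕ)

/-- `Tor^R_k(N, U) = 0` for a right `R`-module `N` and a left `R`-module `U`, `k ≥ 1`:
by dimension shifting this says that for every `(k-1)`-st syzygy `K` of `U` and every
surjection `f : F → K` with `F` free, the induced map `N ⊗ ker f → N ⊗ F` is injective. -/
noncomputable def TorVanishes (k : ℕ) (N : ModuleCat.{u} Rᵐᵒᵖ) (U : ModuleCat.{u} R) : Prop :=
  ∀ (K : ModuleCat.{u} R), IsSyzygy R (k - 1) U K →
    ∀ (F : ModuleCat.{u} R) (f : F →ₗ[R] K), Module.Free R F → Function.Surjective f →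
      Function.Injective
        (rtmap R (LinearMap.id (M := N)) (LinearMap.ker f).subtype)

/-- `N` is an `n`-𝒳-flat right `R`-module: `Tor^R_n(N, U) = 0` for every
`n`-presented `U ∈ 𝒳`. -/
noncomputable def IsNXFlat (N : ModuleCat.{u} Rᵐᵒᵖ) : Prop :=
  ∀ U ∈ 𝒳, IsNPresented R n U → TorVanishes R n N U

/-- `N` has `n`-𝒳-flat dimension at most `m`:
`Tor^R_{n+i}(N, U) = 0` for all `i ≥ m + 1` and all `n`-presented `U ∈ 𝒳`. -/
noncomputable def NXFlatDimLE (m : ℕ) (N : ModuleCat.{u} Rᵐᵒᵖ) : Prop :=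
  ∀ U ∈ 𝒳, IsNPresented R n U → ∀ i : ℕ, m + 1 ≤ i → TorVanishes R (n + i) N U

/-- `N` has finite `n`-𝒳-flat dimension. -/
noncomputable def HasFiniteNXFlatDim (N : ModuleCat.{u} Rᵐᵒᵖ) : Prop := ∃ m, NXFlatDimLE R 𝒳 n m N

end Tensor

section Pure

variable (R : Type u) [Ring R] (𝒳 : Set (ModuleCat.{u} R)) (n : ℕ)

/-- A short exact sequence `0 → A → B → C → 0` of left `R`-modules (given by `i` and `p`)
is special 𝒳-pure if `0 → Hom(K, A) → Hom(K, B) → Hom(K, C) → 0` is exact for every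
special 𝒳-presented module `K`. -/
def IsSpecialXPure {A B C : Type u} [AddCommGroup A] [Module R A] [AddCommGroup B] [Module R B]
    [AddCommGroup C] [Module R C] (i : A →ₗ[R] B) (p : B →ₗ[R] C) : Prop :=
  ∀ K : ModuleCat.{u} R, IsSpecialPresented R 𝒳 n K →
    Function.Injective (fun g : K →ₗ[R] A => i.comp g) ∧
    Function.Exact (fun g : K →ₗ[R] A => i.comp g) (fun g : K →ₗ[R] B => p.comp g) ∧
    Function.Surjective (fun g : K →ₗ[R] B => p.comp g)

/-- A short exact sequence `0 → A → B → C → 0` of right `R`-modules (given by `i` and `p`)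
is special 𝒳-pure if `0 → A ⊗ K → B ⊗ K → C ⊗ K → 0` is exact for every special
𝒳-presented (left `R`-) module `K`. -/
noncomputable def IsSpecialXPureRight {A B C : Type u}
    [AddCommGroup A] [Module Rᵐᵒᵖ A] [AddCommGroup B] [Module Rᵐᵒᵖ B]
    [AddCommGroup C] [Module Rᵐᵒᵖ C] (i : A →ₗ[Rᵐᵒᵖ] B) (p : B →ₗ[Rᵐᵒᵖ] C) : Prop :=
  ∀ K : ModuleCat.{u} R, IsSpecialPresented R 𝒳 n K →
    Function.Injective (rtmap R i (LinearMap.id (M := K))) ∧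
    Function.Exact (rtmap R i (LinearMap.id (M := K))) (rtmap R p (LinearMap.id (M := K))) ∧
    Function.Surjective (rtmap R p (LinearMap.id (M := K)))

/-- `R` is self left `n`-𝒳-injective. -/
noncomputable def IsSelfNXInjective : Prop := IsNXInjective R 𝒳 n (ModuleCat.of R R)

end Pure

section Gorenstein

variable (R : Type u) [Ring R] (𝒳 : Set (ModuleCat.{u} R)) (n : ℕ)

/-- `G` is a Gorenstein `n`-𝒳-injective left `R`-module: there is an exact complex
`⋯ → A_1 → A_0 → A^0 → A^1 → ⋯` of `n`-𝒳-injective modules with `G = ker(A^0 → A^1)`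
which stays exact under `Hom_R(K, -)` for every special 𝒳-presented `K` of finite
projective dimension. -/
noncomputable def IsGorNXInjective (G : ModuleCat.{u} R) : Prop :=
  ∃ (C : ℤ → ModuleCat.{u} R) (d : ∀ i : ℤ, C i →ₗ[R] C (i - 1)),
    (∀ i, IsNXInjective R 𝒳 n (C i)) ∧
    (∀ i : ℤ, Function.Exact (d i) (d (i - 1))) ∧
    Nonempty (G ≃ₗ[R] LinearMap.ker (d 0)) ∧
    (∀ K : ModuleCat.{u} R, IsSpecialPresented R 𝒳 n K → HasFiniteProjDim R K →
      ∀ i : ℤ, Function.Exact (fun g : K →ₗ[R] C i => (d i).comp g)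
        (fun g : K →ₗ[R] C (i - 1) => (d (i - 1)).comp g))

/-- `G` is a Gorenstein `n`-𝒳-flat right `R`-module: there is an exact complex
`⋯ → F_1 → F_0 → F^0 → F^1 → ⋯` of `n`-𝒳-flat right modules with `G = ker(F^0 → F^1)`
which stays exact under `- ⊗_R K` for every special 𝒳-presented `K` of finite
flat dimension. -/
noncomputable def IsGorNXFlat (G : ModuleCat.{u} Rᵐᵒᵖ) : Prop :=
  ∃ (C : ℤ → ModuleCat.{u} Rᵐᵒᵖ) (d : ∀ i : ℤ, C i →ₗ[Rᵐᵒᵖ] C (i - 1)),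
    (∀ i, IsNXFlat R 𝒳 n (C i)) ∧
    (∀ i : ℤ, Function.Exact (d i) (d (i - 1))) ∧
    Nonempty (G ≃ₗ[Rᵐᵒᵖ] LinearMap.ker (d 0)) ∧
    (∀ K : ModuleCat.{u} R, IsSpecialPresented R 𝒳 n K → HasFiniteFlatDim R K →
      ∀ i : ℤ, Function.Exact (rtmap R (d i) (LinearMap.id (M := K)))
        (rtmap R (d (i - 1)) (LinearMap.id (M := K))))

end Gorenstein

section GorensteinAbsolute

/-- `G` is a Gorenstein injective module over `S`: there is an exact complex of injective
modules with `G = ker(E^0 → E^1)` which stays exact under `Hom(I, -)` for every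
injective module `I`. -/
noncomputable def IsGorensteinInjective (S : Type u) [Ring S] (G : ModuleCat.{u} S) : Prop :=
  ∃ (C : ℤ → ModuleCat.{u} S) (d : ∀ i : ℤ, C i →ₗ[S] C (i - 1)),
    (∀ i, Module.Injective S (C i)) ∧
    (∀ i : ℤ, Function.Exact (d i) (d (i - 1))) ∧
    Nonempty (G ≃ₗ[S] LinearMap.ker (d 0)) ∧
    (∀ I : ModuleCat.{u} S, Module.Injective S I →
      ∀ i : ℤ, Function.Exact (fun g : I →ₗ[S] C i => (d i).comp g)
        (fun g : I →ₗ[S] C (i - 1) => (d (i - 1)).comp g))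

/-- `G` is a Gorenstein projective module over `S`: there is an exact complex of projective
modules with `G = ker(P^0 → P^1)` which stays exact under `Hom(-, Q)` for every
projective module `Q`. -/
def IsGorensteinProjective (S : Type u) [Ring S] (G : ModuleCat.{u} S) : Prop :=
  ∃ (C : ℤ → ModuleCat.{u} S) (d : ∀ i : ℤ, C i →ₗ[S] C (i - 1)),
    (∀ i, Module.Projective S (C i)) ∧
    (∀ i : ℤ, Function.Exact (d i) (d (i - 1))) ∧
    Nonempty (G ≃ₗ[S] LinearMap.ker (d 0)) ∧
    (∀ Q : ModuleCat.{u} S, Module.Projective S Q →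
      ∀ i : ℤ, Function.Exact (fun g : C (i - 1 - 1) →ₗ[S] Q => g.comp (d (i - 1)))
        (fun g : C (i - 1) →ₗ[S] Q => g.comp (d i)))

variable (R : Type u) [Ring R]

/-- `G` is a Gorenstein flat left `R`-module: there is an exact complex of flat left modules
with `G = ker(F^0 → F^1)` which stays exact under `E ⊗_R -` for every injective right
`R`-module `E`. -/
noncomputable def IsGorensteinFlatLeft (G : ModuleCat.{u} R) : Prop :=
  ∃ (C : ℤ → ModuleCat.{u} R) (d : ∀ i : ℤ, C i →ₗ[R] C (i - 1)),
    (∀ i, IsFlatModule R (C i)) ∧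
    (∀ i : ℤ, Function.Exact (d i) (d (i - 1))) ∧
    Nonempty (G ≃ₗ[R] LinearMap.ker (d 0)) ∧
    (∀ E : ModuleCat.{u} Rᵐᵒᵖ, Module.Injective Rᵐᵒᵖ E →
      ∀ i : ℤ, Function.Exact (rtmap R (LinearMap.id (M := E)) (d i))
        (rtmap R (LinearMap.id (M := E)) (d (i - 1))))

/-- `G` is a Gorenstein flat right `R`-module: there is an exact complex of flat right modules
with `G = ker(F^0 → F^1)` which stays exact under `- ⊗_R E` for every injective left
`R`-module `E`. -/
noncomputable def IsGorensteinFlatRight (G : ModuleCat.{u} Rᵐᵒᵖ) : Prop :=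
  ∃ (C : ℤ → ModuleCat.{u} Rᵐᵒᵖ) (d : ∀ i : ℤ, C i →ₗ[Rᵐᵒᵖ] C (i - 1)),
    (∀ i, IsFlatRight R (C i)) ∧
    (∀ i : ℤ, Function.Exact (d i) (d (i - 1))) ∧
    Nonempty (G ≃ₗ[Rᵐᵒᵖ] LinearMap.ker (d 0)) ∧
    (∀ E : ModuleCat.{u} R, Module.Injective R E →
      ∀ i : ℤ, Function.Exact (rtmap R (d i) (LinearMap.id (M := E)))
        (rtmap R (d (i - 1)) (LinearMap.id (M := E))))

end GorensteinAbsolute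

/-!
Dimension shifting along the first `n - 1` steps of a finitely generated free resolution of
`U ∈ 𝒳` turns `Ext^n(U, M) = 0` into an extension property: for the special 𝒳-presented module `K`
so obtained and the next surjection `f : F → K` from a finitely generated free module, every map
`ker f → M` extends to `F`. This property passes from `B` to a special 𝒳-pure submodule `A`: extend
`ker f → A ⊆ B` to `ψ : F → B`; then `F → B → B/A` factors through `K`, purity lifts the induced
map to `χ : K → B`, and `ψ - χ ∘ f` lands in `A` and still extends the given map. Injective modules
have the extension property outright.
-/

open Limits

namespace CategoryTheory

variable {C : Type*} [Category C] [Abelian C]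

lemma ChainComplex.exactAt_augment_succ_succ {Q : ChainComplex C ℕ} {X : C} (f : Q.X 0 ⟶ X)
    (w : Q.d 1 0 ≫ f = 0) {n : ℕ} (h : Q.ExactAt (n + 1)) :
    (Q.augment f w).ExactAt (n + 2) := by
  rw [HomologicalComplex.exactAt_iff' _ (n + 3) (n + 2) (n + 1) (by simp) (by simp)]
  rw [HomologicalComplex.exactAt_iff' _ (n + 2) (n + 1) n (by simp) (by simp)] at h
  exact h

lemma ChainComplex.linearYonedaObj_exactAt_succ_iff (Q : ChainComplex C ℕ) (M : C) (j : ℕ) :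
    (Q.linearYonedaObj ℤ M).ExactAt (j + 1) ↔
      ∀ g : Q.X (j + 1) ⟶ M, Q.d (j + 2) (j + 1) ≫ g = 0 →
        ∃ h : Q.X j ⟶ M, Q.d (j + 1) j ≫ h = g := by
  rw [HomologicalComplex.exactAt_iff' _ j (j + 1) (j + 2) (by simp) (by simp),
    ShortComplex.moduleCat_exact_iff]
  rfl

namespace ProjectiveResolution

/- `P.π.f 0` lands in `((single₀ C).obj S.X₁).X 0`, which is `S.X₁` only up to unfolding, so
`simp` and `rw` cannot rewrite composites `P.π.f 0 ≫ S.f`; the proofs below are terms. -/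

variable {S : ShortComplex C} (P : ProjectiveResolution S.X₁)

lemma π_f_zero_comp_f_comp_g : (P.π.f 0 ≫ S.f) ≫ S.g = 0 :=
  (Category.assoc _ _ _).trans ((P.π.f 0 ≫= S.zero).trans Limits.comp_zero)

lemma d_comp_π_f_zero_comp_f : P.complex.d 1 0 ≫ P.π.f 0 ≫ S.f = 0 :=
  (P.complex_d_comp_π_f_zero_assoc S.f).trans Limits.zero_comp

variable {P}

lemma exact_π_f_zero_comp_f (hS : S.ShortExact) :
    (ShortComplex.mk _ _ P.π_f_zero_comp_f_comp_g).Exact := by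
  let α : ShortComplex.mk _ _ P.π_f_zero_comp_f_comp_g ⟶ S :=
    { τ₁ := P.π.f 0
      τ₂ := 𝟙 _
      τ₃ := 𝟙 _
      comm₁₂ := (Category.comp_id _).symm
      comm₂₃ := (Category.id_comp _).trans (Category.comp_id _).symm }
  have : Epi α.τ₁ := (inferInstance : Epi (P.π.f 0))
  exact (ShortComplex.exact_iff_of_epi_of_isIso_of_mono α).2 hS.exact

lemma exact_d_π_f_zero_comp_f (hS : S.ShortExact) :
    (ShortComplex.mk _ _ P.d_comp_π_f_zero_comp_f).Exact := by
  let α : ShortComplex.mk _ _ P.complex_d_comp_π_f_zero ⟶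
      ShortComplex.mk _ _ P.d_comp_π_f_zero_comp_f :=
    { τ₁ := 𝟙 _
      τ₂ := 𝟙 _
      τ₃ := S.f
      comm₁₂ := (Category.id_comp _).trans (Category.comp_id _).symm
      comm₂₃ := Category.id_comp _ }
  have : Mono α.τ₃ := hS.mono_f
  exact (ShortComplex.exact_iff_of_epi_of_isIso_of_mono α).1 P.exact₀

variable (P)

noncomputable def ofShortExact (hS : S.ShortExact) [Projective S.X₂] :
    ProjectiveResolution S.X₃ where
  complex := P.complex.augment (P.π.f 0 ≫ S.f) P.d_comp_π_f_zero_comp_f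
  projective
    | 0 => ‹Projective S.X₂›
    | n + 1 => P.projective n
  π := (ChainComplex.toSingle₀Equiv _ _).symm ⟨S.g, P.π_f_zero_comp_f_comp_g⟩
  quasiIso := ⟨fun n => by
    rcases n with _ | _ | n
    · rw [ChainComplex.quasiIsoAt₀_iff, ShortComplex.quasiIso_iff_of_zeros' _ rfl rfl rfl]
      refine (ShortComplex.exact_and_epi_g_iff_of_iso ?_).2
        ⟨exact_π_f_zero_comp_f (P := P) hS, hS.epi_g⟩
      exact ShortComplex.isoMk (Iso.refl _) (Iso.refl _) (Iso.refl _)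
        ((Category.id_comp _).trans (Category.comp_id _).symm)
        ((Category.id_comp S.g).trans
          ((ChainComplex.toSingle₀Equiv_symm_apply_f_zero
            (C := P.complex.augment _ P.d_comp_π_f_zero_comp_f) S.g
            P.π_f_zero_comp_f_comp_g).symm.trans (Category.comp_id _).symm))
    · rw [quasiIsoAt_iff_exactAt' _ _ (ChainComplex.exactAt_succ_single_obj _ _),
        HomologicalComplex.exactAt_iff' _ 2 1 0 (by simp) (by simp)]
      exact exact_d_π_f_zero_comp_f (P := P) hS
    · rw [quasiIsoAt_iff_exactAt' _ _ (ChainComplex.exactAt_succ_single_obj _ _)]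
      exact ChainComplex.exactAt_augment_succ_succ _ _ (P.complex_exactAt_succ n)⟩

end ProjectiveResolution

variable [EnoughProjectives C]

lemma ProjectiveResolution.isZero_Ext_iff_exactAt {X : C} (P : ProjectiveResolution X) (n : ℕ)
    (M : C) :
    IsZero (((Ext ℤ C n).obj (Opposite.op X)).obj M) ↔
      (P.complex.linearYonedaObj ℤ M).ExactAt n := by
  rw [HomologicalComplex.exactAt_iff_isZero_homology]
  exact (P.isoExt n M).isZero_iff

namespace ShortComplex.ShortExact

variable {S : ShortComplex C} (hS : S.ShortExact) [Projective S.X₂]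
include hS

lemma isZero_Ext_succ_succ_iff (n : ℕ) (M : C) :
    IsZero (((Ext ℤ C (n + 2)).obj (Opposite.op S.X₃)).obj M) ↔
      IsZero (((Ext ℤ C (n + 1)).obj (Opposite.op S.X₁)).obj M) := by
  let P := ProjectiveResolution.of S.X₁
  rw [(P.ofShortExact hS).isZero_Ext_iff_exactAt, P.isZero_Ext_iff_exactAt,
    ChainComplex.linearYonedaObj_exactAt_succ_iff, ChainComplex.linearYonedaObj_exactAt_succ_iff]
  rfl

lemma isZero_Ext_one_iff (M : C) :
    IsZero (((Ext ℤ C 1).obj (Opposite.op S.X₃)).obj M) ↔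
      Function.Surjective fun ψ : S.X₂ ⟶ M => S.f ≫ ψ := by
  let P := ProjectiveResolution.of S.X₁
  rw [(P.ofShortExact hS).isZero_Ext_iff_exactAt, ChainComplex.linearYonedaObj_exactAt_succ_iff]
  constructor
  · intro h φ
    obtain ⟨ψ, hψ⟩ := h (P.π.f 0 ≫ φ) ((P.complex_d_comp_π_f_zero_assoc φ).trans Limits.zero_comp)
    exact ⟨ψ, (cancel_epi (P.π.f 0)).1 ((Category.assoc _ _ _).symm.trans hψ)⟩
  · intro h g hg
    obtain ⟨ψ, hψ⟩ := h (P.exact₀.desc g hg)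
    exact ⟨ψ, (Category.assoc _ _ _).trans ((P.π.f 0 ≫= hψ).trans (P.exact₀.g_desc g hg))⟩

end ShortComplex.ShortExact

end CategoryTheory

section ModuleTheory

variable {R F K B N : Type*} [Ring R] [AddCommGroup F] [Module R F] [AddCommGroup K] [Module R K]
  [AddCommGroup B] [Module R B] [AddCommGroup N] [Module R N]

theorem LinearMap.exists_comp_eq_of_ker_le {f : F →ₗ[R] K} (hf : Function.Surjective f)
    {g : F →ₗ[R] N} (h : ker f ≤ ker g) : ∃ χ : K →ₗ[R] N, χ ∘ₗ f = g :=
  ⟨(ker f).liftQ g h ∘ₗ (f.quotKerEquivOfSurjective hf).symm.toLinearMap, by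
    ext x
    simp⟩

theorem Submodule.surjective_comp_ker_subtype_of_surjective_mkQ_comp (A : Submodule R B)
    {f : F →ₗ[R] K} (hf : Function.Surjective f)
    (hB : Function.Surjective fun ψ : F →ₗ[R] B => ψ ∘ₗ (ker f).subtype)
    (hK : Function.Surjective fun g : K →ₗ[R] B => A.mkQ ∘ₗ g) :
    Function.Surjective fun ψ : F →ₗ[R] A => ψ ∘ₗ (ker f).subtype := by
  intro φ
  obtain ⟨ψ, hψ⟩ := hB (A.subtype ∘ₗ φ)
  have hψ' (x : ker f) : ψ x = φ x := LinearMap.congr_fun hψ x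
  have hker : ker f ≤ ker (A.mkQ ∘ₗ ψ) := fun x hx => by
    simp [hψ' ⟨x, hx⟩]
  obtain ⟨χ, hχ⟩ := LinearMap.exists_comp_eq_of_ker_le hf hker
  obtain ⟨χ', hχ'⟩ := hK χ
  have hmem (x : F) : (ψ - χ' ∘ₗ f) x ∈ A := by
    have h₁ : A.mkQ (χ' (f x)) = χ (f x) := LinearMap.congr_fun hχ' (f x)
    have h₂ : χ (f x) = A.mkQ (ψ x) := LinearMap.congr_fun hχ x
    rw [← A.ker_mkQ, LinearMap.mem_ker, LinearMap.sub_apply, map_sub, LinearMap.comp_apply, h₁, h₂,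
      sub_self]
  refine ⟨(ψ - χ' ∘ₗ f).codRestrict A hmem, LinearMap.ext fun x => Subtype.ext ?_⟩
  simp [hψ' x]

end ModuleTheory

section ExtVanishes

variable {R : Type u} [Ring R]

theorem extVanishes_succ_succ_iff_of_surjective {F U : ModuleCat.{u} R} [Module.Free R F]
    {f : F →ₗ[R] U} (hf : Function.Surjective f) (n : ℕ) (M : ModuleCat.{u} R) :
    ExtVanishes R (n + 2) U M ↔ ExtVanishes R (n + 1) (ModuleCat.of R (ker f)) M := by
  simp only [ExtVanishes, ← ModuleCat.isZero_iff_subsingleton]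
  exact (LinearMap.shortExact_shortComplexKer hf).isZero_Ext_succ_succ_iff n M

theorem extVanishes_one_iff_of_surjective {F U : ModuleCat.{u} R} [Module.Free R F]
    {f : F →ₗ[R] U} (hf : Function.Surjective f) (M : ModuleCat.{u} R) :
    ExtVanishes R 1 U M ↔ Function.Surjective fun ψ : F →ₗ[R] M => ψ ∘ₗ (ker f).subtype := by
  rw [ExtVanishes, ← ModuleCat.isZero_iff_subsingleton,
    (LinearMap.shortExact_shortComplexKer hf).isZero_Ext_one_iff]
  constructor
  · intro h φ
    obtain ⟨ψ, hψ⟩ := h (ModuleCat.ofHom φ)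
    exact ⟨ψ.hom, congrArg ModuleCat.Hom.hom hψ⟩
  · intro h φ
    obtain ⟨ψ, hψ⟩ := h φ.hom
    exact ⟨ModuleCat.ofHom ψ, ModuleCat.hom_ext hψ⟩

theorem IsNPresented.exists_syzygy_extVanishes_iff :
    ∀ (n : ℕ) (U : ModuleCat.{u} R), IsNPresented R (n + 1) U →
      ∃ (K F : ModuleCat.{u} R) (f : F →ₗ[R] K), IsSyzygy R n U K ∧ Function.Surjective f ∧
        ∀ M : ModuleCat.{u} R, ExtVanishes R (n + 1) U M ↔
          Function.Surjective fun ψ : F →ₗ[R] M => ψ ∘ₗ (ker f).subtype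
  | 0, U, ⟨F, f, _, _, hf, _⟩ =>
    ⟨U, F, f, ⟨LinearEquiv.refl R U⟩, hf, extVanishes_one_iff_of_surjective hf⟩
  | n + 1, U, ⟨F₀, f₀, hfree, hfin, hf₀, hker⟩ => by
    obtain ⟨K, F, f, hsyz, hf, hext⟩ := exists_syzygy_extVanishes_iff n _ hker
    exact ⟨K, F, f, ⟨F₀, f₀, hfree, hfin, hf₀, hsyz⟩, hf,
      fun M => (extVanishes_succ_succ_iff_of_surjective hf₀ n M).trans (hext M)⟩

end ExtVanishes

theorem IsNXInjective.of_isSpecialXPure {R : Type u} [Ring R] {𝒳 : Set (ModuleCat.{u} R)} {n : ℕ}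
    {B : ModuleCat.{u} R} {A : Submodule R B} (hB : IsNXInjective R 𝒳 (n + 1) B)
    (hA : IsSpecialXPure R 𝒳 (n + 1) A.subtype A.mkQ) :
    IsNXInjective R 𝒳 (n + 1) (ModuleCat.of R A) := by
  intro U hU hpres
  obtain ⟨K, F, f, hsyz, hf, hext⟩ := IsNPresented.exists_syzygy_extVanishes_iff n U hpres
  have hK : IsSpecialPresented R 𝒳 (n + 1) K := ⟨U, hU, hpres, hsyz⟩
  rw [hext]
  exact A.surjective_comp_ker_subtype_of_surjective_mkQ_comp hf
    ((hext B).1 (hB U hU hpres)) (hA K hK).2.2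

theorem IsNXInjective.of_injective {R : Type u} [Ring R] (𝒳 : Set (ModuleCat.{u} R)) (n : ℕ)
    (B : ModuleCat.{u} R) [Module.Injective R B] : IsNXInjective R 𝒳 (n + 1) B := by
  intro U _ hpres
  obtain ⟨K, F, f, -, -, hext⟩ := IsNPresented.exists_syzygy_extVanishes_iff n U hpres
  exact (hext B).2 (Module.Injective.extension_property R B _ _ _ (ker f).injective_subtype)

/-- every special 𝒳-pure submodule of an `n`-𝒳-injective left `R`-module is
`n`-𝒳-injective; in particular, every special 𝒳-pure submodule of an injective left
`R`-module is `n`-𝒳-injective. -/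
theorem statement_2 (R : Type u) [Ring R] (𝒳 : Set (ModuleCat.{u} R)) (n : ℕ) (hn : 1 ≤ n) :
    (∀ (B : ModuleCat.{u} R) (A : Submodule R B), IsNXInjective R 𝒳 n B →
      IsSpecialXPure R 𝒳 n A.subtype A.mkQ → IsNXInjective R 𝒳 n (ModuleCat.of R A)) ∧
    (∀ (B : ModuleCat.{u} R) (A : Submodule R B), Module.Injective R B →
      IsSpecialXPure R 𝒳 n A.subtype A.mkQ → IsNXInjective R 𝒳 n (ModuleCat.of R A)) := by
  obtain ⟨m, rfl⟩ : ∃ m, n = m + 1 := ⟨n - 1, by omega⟩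
  exact ⟨fun B A hB hA => hB.of_isSpecialXPure hA,
    fun B A _ hA => (IsNXInjective.of_injective 𝒳 m B).of_isSpecialXPure hA⟩
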